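/- arXiv:1204.1033 — 5 statements merged into one kernel-verified Lean document; each statement's English description precedes it below -/
import Mathlib

section
/- For every nonzero complex number q and every integer l ≥ 2, the conjugation makes PG_{l,q} into a *-algebra — that is, (fg)* = g* f* holds for all f, g ∈ PG_{l,q} — if and only if q is real. -/
/-!
Reversing the order of the four summation indices, `(i, j, k, m) ↦ (m, k, j, i)`, matches the
terms of `(fg)*` with those of `g* f*` except that the twist `q^{-jk}` is replaced by its
conjugate, so the conjugation is anti-multiplicative when `q` is real. Conversely, for
`x = θ̄` and `y = θ` we have `x* = y` and `y* = x`, so anti-multiplicativity says that `xy` is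
self-adjoint; its coefficient of `θ θ̄` is `q⁻¹`, which therefore has to be real.
-/

open scoped BigOperators

namespace Para

/-- The paragrassmann algebra `PG_{l,q}` modeled as families of coefficients
in the anti-Wick basis `{θ^i θ̄^j}`. -/
abbrev PG (l : ℕ) := Fin l → Fin l → ℂ

/-- The anti-Wick basis element `θ^i θ̄^j`. -/
def basis (l : ℕ) (i j : ℕ) : PG l := fun a b => if (a : ℕ) = i ∧ (b : ℕ) = j then 1 else 0

/-- The multiplication of `PG_{l,q}`:
`(θ^i θ̄^j)(θ^k θ̄^m) = q^{-jk} θ^{i+k} θ̄^{j+m}` when `i+k ≤ l-1` and `j+m ≤ l-1`,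
and `0` otherwise. -/
noncomputable def pgMul (l : ℕ) (q : ℂ) (f g : PG l) : PG l := fun p r =>
  ∑ i : Fin l, ∑ j : Fin l, ∑ k : Fin l, ∑ m : Fin l,
    if (i : ℕ) + (k : ℕ) = (p : ℕ) ∧ (j : ℕ) + (m : ℕ) = (r : ℕ)
      then q ^ (-(((j : ℕ) * (k : ℕ) : ℕ) : ℤ)) * f i j * g k m else 0

/-- The conjugation `f ↦ f*`, determined by `(θ^i θ̄^j)* = θ^j θ̄^i` and anti-linearity. -/
def pgStar (l : ℕ) (f : PG l) : PG l := fun i j => (starRingEnd ℂ) (f j i)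

theorem sum_sum_sum_sum_reverse {α M : Type*} [Fintype α] [AddCommMonoid M]
    (T : α → α → α → α → M) :
    ∑ i, ∑ j, ∑ k, ∑ m, T m k j i = ∑ i, ∑ j, ∑ k, ∑ m, T i j k m := by
  simp only [← Fintype.sum_prod_type']
  exact Fintype.sum_equiv ⟨fun x => (x.2.2.2, x.2.2.1, x.2.1, x.1),
    fun x => (x.2.2.2, x.2.2.1, x.2.1, x.1), fun _ => rfl, fun _ => rfl⟩ _ _ (fun _ => rfl)

theorem pgStar_basis (l i j : ℕ) : pgStar l (basis l i j) = basis l j i := by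
  funext a b
  simp [pgStar, basis, apply_ite (starRingEnd ℂ), and_comm]

theorem pgMul_basis_apply {l : ℕ} (q : ℂ) {i j k m : ℕ} (hi : i < l) (hj : j < l) (hk : k < l)
    (hm : m < l) (p r : Fin l) :
    pgMul l q (basis l i j) (basis l k m) p r =
      if i + k = p ∧ j + m = r then q ^ (-((j * k : ℕ) : ℤ)) else 0 := by
  simp only [pgMul, ← Fintype.sum_prod_type']
  rw [Fintype.sum_eq_single (⟨i, hi⟩, ⟨j, hj⟩, ⟨k, hk⟩, ⟨m, hm⟩)]
  · simp [basis]
  · rintro ⟨a, b, c, d⟩ hne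
    simp only [basis, Ne, Prod.mk.injEq, Fin.ext_iff] at hne ⊢
    split_ifs <;> simp_all

theorem pgStar_pgMul {l : ℕ} {q : ℂ} (hq : starRingEnd ℂ q = q) (f g : PG l) :
    pgStar l (pgMul l q f g) = pgMul l q (pgStar l g) (pgStar l f) := by
  funext p r
  simp only [pgStar, pgMul, map_sum, apply_ite (starRingEnd ℂ), map_zero, map_mul, map_zpow₀, hq]
  rw [← sum_sum_sum_sum_reverse]
  refine Finset.sum_congr rfl fun i _ => Finset.sum_congr rfl fun j _ =>
    Finset.sum_congr rfl fun k _ => Finset.sum_congr rfl fun m _ => ?_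
  have hcond : ((m : ℕ) + j = r ∧ (k : ℕ) + i = p) ↔ ((i : ℕ) + k = p ∧ (j : ℕ) + m = r) := by
    omega
  rw [if_congr hcond rfl rfl, Nat.mul_comm (k : ℕ), mul_right_comm]

theorem star_mul_iff_q_real_general (l : ℕ) (hl : 2 ≤ l) (q : ℂ) :
    (∀ f g : PG l, pgStar l (pgMul l q f g) = pgMul l q (pgStar l g) (pgStar l f)) ↔
      (starRingEnd ℂ) q = q := by
  refine ⟨fun h => ?_, fun hq => pgStar_pgMul hq⟩
  have hcoeff := congrFun₂ (h (basis l 0 1) (basis l 1 0)) ⟨1, hl⟩ ⟨1, hl⟩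
  simp only [pgStar_basis, pgStar] at hcoeff
  rw [pgMul_basis_apply q (by omega) hl hl (by omega)] at hcoeff
  simpa using hcoeff

/-- For every nonzero complex `q` and every integer `l ≥ 2`, the conjugation
makes `PG_{l,q}` a *-algebra, i.e. `(fg)* = g* f*` for all `f, g`, iff `q` is real. -/
theorem star_mul_iff_q_real (l : ℕ) (hl : 2 ≤ l) (q : ℂ) (hq : q ≠ 0) :
    (∀ f g : PG l, pgStar l (pgMul l q f g) = pgMul l q (pgStar l g) (pgStar l f)) ↔
      (starRingEnd ℂ) q = q :=
  star_mul_iff_q_real_general l hl q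

end Para
end

section
/- The restriction of the sesquilinear form ⟨·,·⟩_w to the subspace S = ℬ_H + ℬ_AH of PG_{l,q} is a positive definite Hermitian inner product, and the 2l−1 vectors φ_n := w_n^{−1/2} θ^n for n = 0,…,l−1 together with φ_m* := w_m^{−1/2} θ̄^m for m = 1,…,l−1 form an orthonormal basis of S; in particular S has complex dimension 2l−1. -/
open scoped BigOperators

namespace Para

/-- The weighted sesquilinear form `⟨·,·⟩_w` on `PG_{l,q}` (anti-linear in the first
argument, linear in the second), determined on anti-Wick basis elements by
`⟨θ^a θ̄^b, θ^c θ̄^d⟩_w = w_{a+d}` if `a+d = b+c` and `a+d ≤ l−1`, and `= 0` otherwise. -/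
noncomputable def form (l : ℕ) (w : ℕ → ℝ) (f g : PG l) : ℂ :=
  ∑ a : Fin l, ∑ b : Fin l, ∑ c : Fin l, ∑ d : Fin l,
    (starRingEnd ℂ) (f a b) * g c d *
      (if (a : ℕ) + (d : ℕ) = (b : ℕ) + (c : ℕ) ∧ (a : ℕ) + (d : ℕ) ≤ l - 1
        then ((w ((a : ℕ) + (d : ℕ)) : ℝ) : ℂ) else 0)

/-- The Segal–Bargmann space `ℬ_H = span_ℂ{θ^i : 0 ≤ i ≤ l−1}` (with `θ^i = θ^i θ̄^0`). -/
noncomputable def BH (l : ℕ) : Submodule ℂ (PG l) :=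
  Submodule.span ℂ (Set.range fun i : Fin l => basis l (i : ℕ) 0)

/-- The anti-Segal–Bargmann space `ℬ_AH = span_ℂ{θ̄^j : 0 ≤ j ≤ l−1}`
(with `θ̄^j = θ^0 θ̄^j`). -/
noncomputable def BAH (l : ℕ) : Submodule ℂ (PG l) :=
  Submodule.span ℂ (Set.range fun j : Fin l => basis l 0 (j : ℕ))

/-- The subspace `S = ℬ_H + ℬ_AH`. -/
noncomputable def SSp (l : ℕ) : Submodule ℂ (PG l) := BH l ⊔ BAH l

/-- The vectors `φ_n := w_n^{−1/2} θ^n`. -/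
noncomputable def phi (l : ℕ) (w : ℕ → ℝ) (n : Fin l) : PG l :=
  (((Real.sqrt (w (n : ℕ))) : ℂ))⁻¹ • basis l (n : ℕ) 0

/-- The vectors `φ_m* := w_m^{−1/2} θ̄^m`. -/
noncomputable def phiStar (l : ℕ) (w : ℕ → ℝ) (m : Fin l) : PG l :=
  (((Real.sqrt (w (m : ℕ))) : ℂ))⁻¹ • basis l 0 (m : ℕ)

end Para

/-! The monomials `θ^n` (`0 ≤ n < l`) and `θ̄^m` (`1 ≤ m < l`) are pairwise orthogonal for
`⟨·,·⟩_w`, with `⟨θ^n, θ^n⟩_w = w_n` and `⟨θ̄^m, θ̄^m⟩_w = w_m`: the selection rule `a + d = b + c`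
only lets a mixed pair `θ^n, θ̄^m` interact when `n = m = 0`, and `θ̄^0 = θ^0` is not in the
family. So the `φ_n, φ_m*` are orthonormal and span `S`, and a sesquilinear form restricted to
the span of a finite orthonormal family is, in coordinates, `∑ conj aᵢ * bᵢ`: Hermitian and
positive definite. -/

namespace LinearMap

variable {ι M : Type*} [AddCommGroup M] [Module ℂ M] {B : M →ₗ⋆[ℂ] M →ₗ[ℂ] ℂ} {e : ι → M}

theorem IsOrthoᵢ.smul (ho : B.IsOrthoᵢ e) (c : ι → ℂ) : B.IsOrthoᵢ fun i => c i • e i :=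
  isOrthoᵢ_def.2 fun i j hij => by simp [isOrthoᵢ_def.1 ho i j hij]

theorem apply_inv_sqrt_smul_self {x : M} {c : ℝ} (hx : B x x = c) (hc : 0 < c) :
    B (((√c : ℝ) : ℂ)⁻¹ • x) (((√c : ℝ) : ℂ)⁻¹ • x) = 1 := by
  have hsq : ((√c : ℝ) : ℂ) * ((√c : ℝ) : ℂ) = c := by
    rw [← Complex.ofReal_mul, Real.mul_self_sqrt hc.le]
  have hne : ((√c : ℝ) : ℂ) ≠ 0 := Complex.ofReal_ne_zero.2 (Real.sqrt_pos.2 hc).ne'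
  simp only [map_smulₛₗ₂, map_smul, hx, smul_eq_mul, map_inv₀, Complex.conj_ofReal, ← hsq]
  field_simp

variable [Fintype ι] (ho : B.IsOrthoᵢ e) (h1 : ∀ i, B (e i) (e i) = 1)
include ho h1

theorem apply_sum_smul_of_orthonormal (a b : ι → ℂ) :
    B (∑ i, a i • e i) (∑ i, b i • e i) = ∑ i, starRingEnd ℂ (a i) * b i := by
  classical
  simp only [map_sum, map_smulₛₗ₂, map_smul, LinearMap.sum_apply, smul_eq_mul]
  refine Finset.sum_congr rfl fun i _ => ?_
  rw [Finset.sum_eq_single i (fun j _ hji => by simp [isOrthoᵢ_def.1 ho j i hji])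
    (by simp), h1, mul_one, mul_comm]

theorem conj_apply_of_mem_span {f g : M} (hf : f ∈ Submodule.span ℂ (Set.range e))
    (hg : g ∈ Submodule.span ℂ (Set.range e)) :
    starRingEnd ℂ (B f g) = B g f := by
  obtain ⟨a, rfl⟩ := (Submodule.mem_span_range_iff_exists_fun ℂ).1 hf
  obtain ⟨b, rfl⟩ := (Submodule.mem_span_range_iff_exists_fun ℂ).1 hg
  rw [apply_sum_smul_of_orthonormal ho h1, apply_sum_smul_of_orthonormal ho h1]
  simp only [map_sum, map_mul, Complex.conj_conj, mul_comm]

theorem apply_self_sum_smul_of_orthonormal (a : ι → ℂ) :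
    B (∑ i, a i • e i) (∑ i, a i • e i) = ((∑ i, Complex.normSq (a i) : ℝ) : ℂ) := by
  rw [apply_sum_smul_of_orthonormal ho h1]
  push_cast
  simp [Complex.normSq_eq_conj_mul_self]

open ComplexOrder in
theorem apply_self_nonneg_of_mem_span {f : M} (hf : f ∈ Submodule.span ℂ (Set.range e)) :
    0 ≤ B f f := by
  obtain ⟨a, rfl⟩ := (Submodule.mem_span_range_iff_exists_fun ℂ).1 hf
  rw [apply_self_sum_smul_of_orthonormal ho h1]
  exact Complex.zero_le_real.2 (Finset.sum_nonneg fun i _ => Complex.normSq_nonneg _)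

theorem apply_self_eq_zero_iff_of_mem_span {f : M} (hf : f ∈ Submodule.span ℂ (Set.range e)) :
    B f f = 0 ↔ f = 0 := by
  refine ⟨fun h => ?_, fun h => by simp [h]⟩
  obtain ⟨a, rfl⟩ := (Submodule.mem_span_range_iff_exists_fun ℂ).1 hf
  rw [apply_self_sum_smul_of_orthonormal ho h1, Complex.ofReal_eq_zero,
    Finset.sum_eq_zero_iff_of_nonneg fun i _ => Complex.normSq_nonneg _] at h
  simp [Complex.normSq_eq_zero.1 (h _ (Finset.mem_univ _))]

end LinearMap

namespace Para

variable {l : ℕ} (w : ℕ → ℝ)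

variable (l) in
noncomputable def formₛₗ : PG l →ₗ⋆[ℂ] PG l →ₗ[ℂ] ℂ :=
  LinearMap.mk₂'ₛₗ (starRingEnd ℂ) (RingHom.id ℂ) (form l w)
    (fun f f' g => by simp only [form, Pi.add_apply, map_add, add_mul, Finset.sum_add_distrib])
    (fun c f g => by
      simp only [form, Pi.smul_apply, smul_eq_mul, map_mul, Finset.mul_sum, mul_assoc])
    (fun f g g' => by simp only [form, Pi.add_apply, mul_add, add_mul, Finset.sum_add_distrib])
    (fun c f g => by simp only [form, Pi.smul_apply, smul_eq_mul, RingHom.id_apply,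
      Finset.mul_sum, mul_assoc, mul_left_comm c])

theorem formₛₗ_apply (f g : PG l) : formₛₗ l w f g = form l w f g := rfl

theorem form_basis {i j c d : ℕ} (hi : i < l) (hj : j < l) (hc : c < l) (hd : d < l) :
    form l w (basis l i j) (basis l c d) =
      if i + d = j + c ∧ i + d ≤ l - 1 then (w (i + d) : ℂ) else 0 := by
  lift i to Fin l using hi
  lift j to Fin l using hj
  lift c to Fin l using hc
  lift d to Fin l using hd
  simp only [form, basis, Fin.val_eq_val, ite_and, apply_ite (starRingEnd ℂ), map_one, map_zero,
    ite_mul, one_mul, zero_mul, Finset.sum_ite_eq', Finset.mem_univ, if_true,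
    Finset.sum_ite_irrel, Finset.sum_const_zero]

abbrev SIndex (l : ℕ) := Fin l ⊕ {m : Fin l // 1 ≤ (m : ℕ)}

def SIndex.monomial : SIndex l → PG l
  | .inl n => basis l n 0
  | .inr m => basis l 0 m

def SIndex.degree : SIndex l → ℕ
  | .inl n => n
  | .inr m => m

theorem form_monomial_monomial (i j : SIndex l) :
    form l w i.monomial j.monomial = if i = j then (w i.degree : ℂ) else 0 := by
  rcases i with n | ⟨n, hn⟩ <;> rcases j with m | ⟨m, hm⟩ <;>
    have := n.isLt <;> have := m.isLt <;>
    simp only [SIndex.monomial, SIndex.degree] <;>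
    rw [form_basis w (by omega) (by omega) (by omega) (by omega)]
  all_goals
    simp only [Sum.inl.injEq, Sum.inr.injEq, reduceCtorEq, Subtype.mk.injEq, Fin.ext_iff,
      add_zero, zero_add]
    split_ifs <;> grind

theorem SIndex.degree_lt (i : SIndex l) : i.degree < l := by
  rcases i with n | ⟨m, _⟩
  exacts [n.isLt, m.isLt]

theorem card_SIndex : Fintype.card (SIndex l) = 2 * l - 1 := by
  have hstar : Fintype.card {m : Fin l // 1 ≤ (m : ℕ)} = l - 1 := by
    simp_rw [← not_lt, Fintype.card_subtype_compl, Fintype.card_fin, Fintype.card_subtype,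
      Fin.card_filter_val_lt]
    omega
  rw [Fintype.card_sum, Fintype.card_fin, hstar]
  omega

theorem isOrthoᵢ_monomial : (formₛₗ l w).IsOrthoᵢ (SIndex.monomial (l := l)) :=
  LinearMap.isOrthoᵢ_def.2 fun i j hij => by
    rw [formₛₗ_apply, form_monomial_monomial, if_neg hij]

theorem formₛₗ_monomial_self (i : SIndex l) :
    formₛₗ l w i.monomial i.monomial = w i.degree := by
  rw [formₛₗ_apply, form_monomial_monomial, if_pos rfl]

theorem monomial_mem_SSp (i : SIndex l) : i.monomial ∈ SSp l := by
  rcases i with n | ⟨m, _⟩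
  · exact Submodule.mem_sup_left (Submodule.subset_span ⟨n, rfl⟩)
  · exact Submodule.mem_sup_right (Submodule.subset_span ⟨m, rfl⟩)

variable (l) in
noncomputable def orthoBasis : SIndex l → PG l :=
  Sum.elim (phi l w) fun m => phiStar l w m

theorem orthoBasis_eq (i : SIndex l) :
    orthoBasis l w i = ((√(w i.degree) : ℝ) : ℂ)⁻¹ • i.monomial := by
  rcases i with n | m <;> rfl

theorem range_orthoBasis :
    Set.range (orthoBasis l w) =
      Set.range (phi l w) ∪ phiStar l w '' {m : Fin l | 1 ≤ (m : ℕ)} := by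
  ext f
  simp [orthoBasis, Set.Sum.elim_range]

variable {w}

theorem orthonormal_orthoBasis (hw : ∀ n < l, 0 < w n) :
    (formₛₗ l w).IsOrthoᵢ (orthoBasis l w) ∧
      ∀ i, formₛₗ l w (orthoBasis l w i) (orthoBasis l w i) = 1 := by
  rw [show orthoBasis l w = _ from funext (orthoBasis_eq w)]
  exact ⟨(isOrthoᵢ_monomial (l := l) w).smul _, fun i =>
    LinearMap.apply_inv_sqrt_smul_self (formₛₗ_monomial_self w i) (hw _ i.degree_lt)⟩

theorem form_orthoBasis (hw : ∀ n < l, 0 < w n) (i j : SIndex l) :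
    form l w (orthoBasis l w i) (orthoBasis l w j) = if i = j then 1 else 0 := by
  obtain ⟨ho, h1⟩ := orthonormal_orthoBasis hw
  split_ifs with hij
  · exact hij ▸ h1 i
  · exact LinearMap.isOrthoᵢ_def.1 ho i j hij

theorem monomial_mem_span_orthoBasis (hw : ∀ n < l, 0 < w n) (i : SIndex l) :
    i.monomial ∈ Submodule.span ℂ (Set.range (orthoBasis l w)) := by
  have hsqrt : ((√(w i.degree) : ℝ) : ℂ) ≠ 0 :=
    Complex.ofReal_ne_zero.2 (Real.sqrt_pos.2 (hw _ i.degree_lt)).ne'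
  rw [← smul_inv_smul₀ hsqrt i.monomial, ← orthoBasis_eq]
  exact Submodule.smul_mem _ _ (Submodule.subset_span ⟨i, rfl⟩)

theorem span_orthoBasis (hw : ∀ n < l, 0 < w n) :
    Submodule.span ℂ (Set.range (orthoBasis l w)) = SSp l := by
  refine le_antisymm (Submodule.span_le.2 ?_) (sup_le (Submodule.span_le.2 ?_)
    (Submodule.span_le.2 ?_))
  · rintro _ ⟨i, rfl⟩
    rw [orthoBasis_eq]
    exact Submodule.smul_mem _ _ (monomial_mem_SSp i)
  · rintro _ ⟨n, rfl⟩
    exact monomial_mem_span_orthoBasis hw (.inl n)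
  · rintro _ ⟨m, rfl⟩
    show basis l 0 m ∈ _
    obtain hm | hm := Nat.eq_zero_or_pos m
    · have : basis l 0 m = (SIndex.monomial (.inl ⟨0, m.pos⟩)) := by
        simp [SIndex.monomial, hm]
      exact this ▸ monomial_mem_span_orthoBasis hw _
    · exact monomial_mem_span_orthoBasis hw (.inr ⟨m, hm⟩)

theorem S_inner_product_space_general (l : ℕ)
    (w : ℕ → ℝ) (hw : ∀ n < l, 0 < w n) :
    (∀ f ∈ SSp l, ∀ g ∈ SSp l, (starRingEnd ℂ) (form l w f g) = form l w g f) ∧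
    (∀ f ∈ SSp l, (form l w f f).im = 0 ∧ 0 ≤ (form l w f f).re) ∧
    (∀ f ∈ SSp l, (form l w f f = 0 ↔ f = 0)) ∧
    (∀ n m : Fin l, form l w (phi l w n) (phi l w m) = if n = m then 1 else 0) ∧
    (∀ n m : Fin l, 1 ≤ (n : ℕ) → 1 ≤ (m : ℕ) →
      form l w (phiStar l w n) (phiStar l w m) = if n = m then 1 else 0) ∧
    (∀ n m : Fin l, 1 ≤ (m : ℕ) →
      form l w (phi l w n) (phiStar l w m) = 0 ∧
      form l w (phiStar l w m) (phi l w n) = 0) ∧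
    Submodule.span ℂ
        (Set.range (phi l w) ∪ (phiStar l w '' {m : Fin l | 1 ≤ (m : ℕ)})) = SSp l ∧
    Module.finrank ℂ (SSp l) = 2 * l - 1 := by
  obtain ⟨ho, h1⟩ := orthonormal_orthoBasis hw
  have hspan := span_orthoBasis hw
  refine ⟨fun f hf g hg => ?_, fun f hf => ?_, fun f hf => ?_, fun n m => ?_,
    fun n m hn hm => ?_, fun n m hm => ⟨?_, ?_⟩, ?_, ?_⟩
  · exact LinearMap.conj_apply_of_mem_span ho h1 (hspan ▸ hf) (hspan ▸ hg)
  · obtain ⟨hre, him⟩ :=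
      Complex.nonneg_iff.1 (LinearMap.apply_self_nonneg_of_mem_span ho h1 (hspan ▸ hf))
    exact ⟨him.symm, hre⟩
  · exact LinearMap.apply_self_eq_zero_iff_of_mem_span ho h1 (hspan ▸ hf)
  · simpa [orthoBasis] using form_orthoBasis hw (.inl n) (.inl m)
  · simpa [orthoBasis] using form_orthoBasis hw (.inr ⟨n, hn⟩) (.inr ⟨m, hm⟩)
  · simpa [orthoBasis] using form_orthoBasis hw (.inl n) (.inr ⟨m, hm⟩)
  · simpa [orthoBasis] using form_orthoBasis hw (.inr ⟨m, hm⟩) (.inl n)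
  · rw [← range_orthoBasis, hspan]
  · rw [← hspan, finrank_span_eq_card (LinearMap.linearIndependent_of_isOrthoᵢ ho
      fun i => by simp [h1]), card_SIndex]

/-- The restriction of `⟨·,·⟩_w` to `S = ℬ_H + ℬ_AH` is a positive
definite Hermitian inner product, and the `2l−1` vectors `φ_n` (`n = 0,…,l−1`)
together with `φ_m*` (`m = 1,…,l−1`) form an orthonormal basis of `S`;
in particular `S` has complex dimension `2l−1`. -/
theorem S_inner_product_space (l : ℕ) (hl : 2 ≤ l) (q : ℂ) (hq : q ≠ 0)
    (w : ℕ → ℝ) (hw : ∀ n < l, 0 < w n) :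
    (∀ f ∈ SSp l, ∀ g ∈ SSp l, (starRingEnd ℂ) (form l w f g) = form l w g f) ∧
    (∀ f ∈ SSp l, (form l w f f).im = 0 ∧ 0 ≤ (form l w f f).re) ∧
    (∀ f ∈ SSp l, (form l w f f = 0 ↔ f = 0)) ∧
    (∀ n m : Fin l, form l w (phi l w n) (phi l w m) = if n = m then 1 else 0) ∧
    (∀ n m : Fin l, 1 ≤ (n : ℕ) → 1 ≤ (m : ℕ) →
      form l w (phiStar l w n) (phiStar l w m) = if n = m then 1 else 0) ∧
    (∀ n m : Fin l, 1 ≤ (m : ℕ) →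
      form l w (phi l w n) (phiStar l w m) = 0 ∧
      form l w (phiStar l w m) (phi l w n) = 0) ∧
    Submodule.span ℂ
        (Set.range (phi l w) ∪ (phiStar l w '' {m : Fin l | 1 ≤ (m : ℕ)})) = SSp l ∧
    Module.finrank ℂ (SSp l) = 2 * l - 1 :=
  S_inner_product_space_general l w hw

end Para
end

section
/- For l = 2 and real weights w_0, w_1 > 0, there is a unique function k : ({0,1}²) × ({0,1}²) → ℂ satisfying Σ_{(c,d) ∈ {0,1}²} conj(k_{(a,b),(c,d)}) G_{(c,d),(i,j)} = δ_{(b,a),(i,j)} for all a,b,i,j ∈ {0,1} (where δ_{(b,a),(i,j)} = 1 if b = i and a = j, else 0), and it is given by k_{(1,1),(0,0)} = k_{(0,1),(1,0)} = k_{(1,0),(0,1)} = k_{(0,0),(1,1)} = 1/w_1, k_{(1,1),(1,1)} = −w_0/(w_1)², and all other entries equal to 0. Equivalently, the unique reproducing kernel of PG_{2,q} is K_PG = (1/w_1) θθ̄ ⊗ 1 + (1/w_1) θ̄ ⊗ η + (1/w_1) θ ⊗ η̄ + (1/w_1) 1 ⊗ ηη̄ − (w_0/w_1²) θθ̄ ⊗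 ηη̄. -/
open scoped BigOperators

namespace Para

/-- The `l² × l²` Gram matrix of the anti-Wick basis of the paragrassmann algebra
`PG_{l,q}` with respect to the weighted sesquilinear form: rows and columns are indexed
by pairs `(c,d), (i,j) ∈ {0,…,l−1}²`, and
`G_{(c,d),(i,j)} = w_{c+j}` if `c+j = d+i` and `c+j ≤ l−1`, and `= 0` otherwise. -/
def gram (l : ℕ) (w : ℕ → ℝ) : Matrix (Fin l × Fin l) (Fin l × Fin l) ℝ :=
  Matrix.of fun p r =>
    if (p.1 : ℕ) + (r.2 : ℕ) = (p.2 : ℕ) + (r.1 : ℕ) ∧ (p.1 : ℕ) + (r.2 : ℕ) ≤ l - 1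
      then w ((p.1 : ℕ) + (r.2 : ℕ)) else 0

/-- The explicit reproducing kernel coefficients for `PG_{2,q}`:
`k_{(1,1),(0,0)} = k_{(0,1),(1,0)} = k_{(1,0),(0,1)} = k_{(0,0),(1,1)} = 1/w_1`,
`k_{(1,1),(1,1)} = −w_0/w_1²`, and all other entries `0`. -/
noncomputable def kSpec (w : ℕ → ℝ) (p r : Fin 2 × Fin 2) : ℂ :=
  if p = (1, 1) ∧ r = (0, 0) then ((w 1 : ℂ))⁻¹
  else if p = (0, 1) ∧ r = (1, 0) then ((w 1 : ℂ))⁻¹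
  else if p = (1, 0) ∧ r = (0, 1) then ((w 1 : ℂ))⁻¹
  else if p = (0, 0) ∧ r = (1, 1) then ((w 1 : ℂ))⁻¹
  else if p = (1, 1) ∧ r = (1, 1) then -(w 0 : ℂ) / ((w 1 : ℂ)) ^ 2
  else 0

/-!
Row `(a, b)` of the system says that the conjugated coefficient vector `conj k_{(a,b)}` solves
`x G = e_{(b,a)}`. The `4 × 4` Gram matrix for `l = 2` is invertible as soon as `w_1 ≠ 0`, and its
inverse is real, with row `(b, a)` equal to `kSpec w (a, b)`; so each row equation has exactly
one solution, namely `k_{(a,b)} = kSpec w (a, b)`.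
-/

open Matrix

theorem vecMul_eq_single_one_iff {n R : Type*} [Fintype n] [DecidableEq n] [CommRing R]
    {A B : Matrix n n R} (hBA : B * A = 1) (v : n → R) (q : n) :
    v ᵥ* A = Pi.single q 1 ↔ v = B q := by
  constructor
  · intro hv
    calc v = v ᵥ* (A * B) := by rw [mul_eq_one_comm.mp hBA, vecMul_one]
      _ = B q := by rw [← vecMul_vecMul, hv, single_one_vecMul, row_apply']
  · rintro rfl
    rw [← row_apply' B q, ← single_one_vecMul, vecMul_vecMul, hBA,
      vecMul_one]

theorem star_kSpec (w : ℕ → ℝ) (p : Fin 2 × Fin 2) : star (kSpec w p) = kSpec w p := by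
  ext r
  rw [Pi.star_apply]
  unfold kSpec
  split_ifs <;> simp

theorem kSpec_swap_mul_gram_two (w : ℕ → ℝ) (hw1 : w 1 ≠ 0) :
    (of fun q : Fin 2 × Fin 2 => kSpec w q.swap) * (gram 2 w).map ((↑) : ℝ → ℂ) = 1 := by
  have hw1' : (w 1 : ℂ) ≠ 0 := by exact_mod_cast hw1
  ext ⟨a, b⟩ ⟨i, j⟩
  fin_cases a <;> fin_cases b <;> fin_cases i <;> fin_cases j <;>
    simp [mul_apply, Fintype.sum_prod_type, kSpec, gram] <;>
    field_simp; ring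

theorem reproducing_kernel_PG2_general (w : ℕ → ℝ) (hw1 : 0 < w 1)
    (k : (Fin 2 × Fin 2) → (Fin 2 × Fin 2) → ℂ) :
    (∀ a b i j : Fin 2,
        ∑ p : Fin 2 × Fin 2,
          (starRingEnd ℂ) (k (a, b) p) * ((gram 2 w p (i, j) : ℝ) : ℂ) =
            if b = i ∧ a = j then 1 else 0)
      ↔ k = kSpec w := by
  have hsolve := vecMul_eq_single_one_iff (kSpec_swap_mul_gram_two w hw1.ne')
  calc _ ↔ ∀ a b : Fin 2,
          star (k (a, b)) ᵥ* (gram 2 w).map ((↑) : ℝ → ℂ) = Pi.single (b, a) 1 := by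
        simp only [funext_iff, Prod.forall, vecMul, dotProduct, Pi.single_apply, Prod.ext_iff,
          map_apply, Pi.star_apply, Complex.star_def]
        exact forall₄_congr fun a b i j => by simp only [eq_comm (a := i), eq_comm (a := j)]
    _ ↔ ∀ a b : Fin 2, k (a, b) = kSpec w (a, b) := by
        refine forall₂_congr fun a b => ?_
        rw [hsolve, star_eq_iff_star_eq, eq_comm]
        change _ = star (kSpec w (a, b)) ↔ _
        rw [star_kSpec]
    _ ↔ k = kSpec w := by rw [funext_iff, Prod.forall]

/-- For `l = 2` and weights `w_0, w_1 > 0`, there is a unique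
`k : ({0,1}²) × ({0,1}²) → ℂ` satisfying the coordinate form
`Σ_{(c,d)} conj(k_{(a,b),(c,d)}) G_{(c,d),(i,j)} = δ_{(b,a),(i,j)}` of the reproducing
property of `PG_{2,q}`, and it is given by `kSpec`; i.e. the unique reproducing kernel is
`K_PG = (1/w_1) θθ̄⊗1 + (1/w_1) θ̄⊗η + (1/w_1) θ⊗η̄ + (1/w_1) 1⊗ηη̄ − (w_0/w_1²) θθ̄⊗ηη̄`. -/
theorem reproducing_kernel_PG2 (w : ℕ → ℝ) (hw0 : 0 < w 0) (hw1 : 0 < w 1)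
    (k : (Fin 2 × Fin 2) → (Fin 2 × Fin 2) → ℂ) :
    (∀ a b i j : Fin 2,
        ∑ p : Fin 2 × Fin 2,
          (starRingEnd ℂ) (k (a, b) p) * ((gram 2 w p (i, j) : ℝ) : ℂ) =
            if b = i ∧ a = j then 1 else 0)
      ↔ k = kSpec w :=
  reproducing_kernel_PG2_general w hw1 k

end Para
end

section
/- For every integer l ≥ 2 and all real weights w_0, …, w_{l−1} > 0, the l² × l² Gram matrix G with entries G_{(c,d),(i,j)} = w_{c+j} if c+j = d+i and c+j ≤ l−1 and G_{(c,d),(i,j)} = 0 otherwise satisfies det G = (w_{l−1})^{l²} or det G = −(w_{l−1})^{l²}; in particular det G ≠ 0, so G is invertible. -/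
/-!
Permuting the columns of `G` by `(i, j) ↦ (l-1-j, l-1-i)` gives a matrix whose
`((c, d), (i, j))` entry vanishes unless `c ≤ i` and `d ≤ j`, and whose diagonal entries all
equal `w_{l-1}`. It is therefore upper triangular for the lexicographic order, so
`det G` is the sign of that permutation times `w_{l-1}^{l²}`.
-/

open scoped BigOperators

namespace Para

open Matrix Equiv

def revSwap (l : ℕ) : Perm (Fin l × Fin l) :=
  (Fin.revPerm.prodCongr Fin.revPerm).trans (prodComm _ _)

@[simp]
lemma revSwap_apply {l : ℕ} (p : Fin l × Fin l) : revSwap l p = (p.2.rev, p.1.rev) := rfl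

section

variable {l : ℕ} {w : ℕ → ℝ}

lemma gram_revSwap_self (p : Fin l × Fin l) : gram l w p (revSwap l p) = w (l - 1) := by
  have h₁ := p.1.isLt
  have h₂ := p.2.isLt
  simp only [gram, revSwap_apply, of_apply, Fin.val_rev]
  rw [if_pos (by omega)]
  congr 1
  omega

lemma le_of_gram_revSwap_ne_zero {p r : Fin l × Fin l} (h : gram l w p (revSwap l r) ≠ 0) :
    p.1 ≤ r.1 ∧ p.2 ≤ r.2 := by
  have h₁ := r.1.isLt
  have h₂ := r.2.isLt
  simp only [gram, revSwap_apply, of_apply, Fin.val_rev, ne_eq, ite_eq_right_iff,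
    Classical.not_imp] at h
  rw [Fin.le_def, Fin.le_def]
  omega

lemma isUpperTriangular_gram_submatrix_revSwap :
    (((gram l w).submatrix id (revSwap l)).submatrix ofLex ofLex).IsUpperTriangular := by
  intro p r hrp
  by_contra h
  obtain ⟨h₁, h₂⟩ := le_of_gram_revSwap_ne_zero h
  exact hrp.not_ge (Prod.Lex.toLex_mono ⟨h₁, h₂⟩)

end

lemma det_gram (l : ℕ) (w : ℕ → ℝ) :
    (gram l w).det = Perm.sign (revSwap l) * w (l - 1) ^ (l ^ 2) := by
  have hdet := det_of_isUpperTriangular (isUpperTriangular_gram_submatrix_revSwap (l := l) (w := w))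
  rw [det_submatrix_equiv_self, det_permute'] at hdet
  simp only [submatrix_apply, id, gram_revSwap_self, Finset.prod_const, Finset.card_univ,
    Fintype.card_lex, Fintype.card_prod, Fintype.card_fin, ← sq] at hdet
  rw [← hdet, ← mul_assoc, ← Int.cast_mul, ← Units.val_mul, Int.units_mul_self, Units.val_one,
    Int.cast_one, one_mul]

/-- For every `l ≥ 2` and all weights `w_0, …, w_{l−1} > 0`, the `l² × l²`
Gram matrix satisfies `det G = ±(w_{l−1})^{l²}`; in particular `det G ≠ 0`,
so `G` is invertible. -/
theorem gram_det_general (l : ℕ) (hl : 2 ≤ l) (w : ℕ → ℝ) (hw : ∀ n < l, 0 < w n) :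
    ((gram l w).det = (w (l - 1)) ^ (l ^ 2) ∨ (gram l w).det = -(w (l - 1)) ^ (l ^ 2)) ∧
    (gram l w).det ≠ 0 := by
  have hpos : 0 < w (l - 1) := hw (l - 1) (by omega)
  rw [det_gram]
  rcases Int.units_eq_one_or (Perm.sign (revSwap l)) with hs | hs <;> simp [hs, hpos.ne']

end Para
end

section
/- For every integer l ≥ 2 and all real weights w_0, …, w_{l−1} > 0, the paragrassmann space PG_{l,q} has a unique reproducing kernel with respect to ⟨·,·⟩_w: there exists exactly one function k : ({0,…,l−1}²) × ({0,…,l−1}²) → ℂ such that Σ_{(c,d)} conj(k_{(a,b),(c,d)}) G_{(c,d),(i,j)} = δ_{b,i} δ_{a,j} for all a, b, i, j ∈ {0,…,l−1}; this is the coordinate form of the statement that there is a unique K_PG = Σ k_{(a,b),(c,d)} θ^a θ̄^b ⊗ η^c η̄^d satisfying the reproducing formula f(θ,θ̄) = ⟨K_PG, f(η,η̄)⟩_w for all f ∈ PG_{l,q}. -/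
open scoped BigOperators

/-!
The Gram matrix `G` is invertible: after reflecting the row index, `(c,d) = (l-1-j, l-1-i)`,
the row attached to the column `(i,j)` has the entry `w_{l-1}` there and otherwise only
entries in columns `(i-t, j-t)`, `t > 0`, so `G` is triangular with respect to the total
degree `i + j`. The reproducing condition says exactly that the matrix
`X_{(b,a),p} = conj k_{(a,b),p}` is a left inverse of `G`, and a left inverse of an invertible
matrix exists and is unique.
-/

namespace Matrix

variable {n R : Type*} [Fintype n]

theorem eq_zero_of_mulVec_eq_zero_of_pivots [Semiring R] [NoZeroDivisors R]
    (M : Matrix n n R) (σ : n → n) (f : n → ℕ) (hpivot : ∀ r, M (σ r) r ≠ 0)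
    (hlower : ∀ r r', M (σ r) r' ≠ 0 → r' ≠ r → f r' < f r)
    {x : n → R} (hx : M *ᵥ x = 0) : x = 0 := by
  suffices h : ∀ m r, f r = m → x r = 0 from funext fun r => h _ r rfl
  intro m
  induction m using Nat.strong_induction_on with
  | _ m ih =>
    rintro r rfl
    have hrow : M (σ r) r * x r = 0 := by
      have hrow := congrFun hx (σ r)
      rwa [mulVec, dotProduct, Finset.sum_eq_single r _ (by simp)] at hrow
      intro r' _ hr'
      by_cases hM : M (σ r) r' = 0
      · rw [hM, zero_mul]
      · rw [ih _ (hlower r r' hM hr') r' rfl, mul_zero]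
    exact (mul_eq_zero.mp hrow).resolve_left (hpivot r)

theorem isUnit_of_pivots [DecidableEq n] [Field R]
    (M : Matrix n n R) (σ : n → n) (f : n → ℕ) (hpivot : ∀ r, M (σ r) r ≠ 0)
    (hlower : ∀ r r', M (σ r) r' ≠ 0 → r' ≠ r → f r' < f r) : IsUnit M := by
  rw [← mulVec_injective_iff_isUnit, ← coe_mulVecLin, ← LinearMap.ker_eq_bot,
    ker_mulVecLin_eq_bot_iff]
  exact fun x => M.eq_zero_of_mulVec_eq_zero_of_pivots σ f hpivot hlower

end Matrix

theorem IsUnit.existsUnique_mul_eq_one {M : Type*} [Monoid M] {a : M} (ha : IsUnit a) :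
    ∃! x : M, x * a = 1 :=
  ⟨↑ha.unit⁻¹, ha.unit.inv_mul, fun _ hx => (Units.inv_eq_of_mul_eq_one_left hx).symm⟩

namespace Para

theorem gram_rev_apply_self (l : ℕ) (w : ℕ → ℝ) (i j : Fin l) :
    gram l w (j.rev, i.rev) (i, j) = w (l - 1) := by
  simp only [gram, Matrix.of_apply, Fin.val_rev]
  rw [if_pos (by omega)]
  congr 1
  omega

theorem degree_lt_of_gram_rev_apply_ne_zero {l : ℕ} {w : ℕ → ℝ} {i j : Fin l}
    {r : Fin l × Fin l} (hr : gram l w (j.rev, i.rev) r ≠ 0) (hne : r ≠ (i, j)) :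
    (r.1 : ℕ) + r.2 < i + j := by
  simp only [gram, Matrix.of_apply, Fin.val_rev, ne_eq, ite_eq_right_iff, not_forall] at hr
  obtain ⟨⟨hdiag, hle⟩, -⟩ := hr
  have : (r.1 : ℕ) ≠ i ∨ (r.2 : ℕ) ≠ j := by
    by_contra! h
    exact hne (Prod.ext (Fin.ext h.1) (Fin.ext h.2))
  omega

theorem isUnit_gram {l : ℕ} {w : ℕ → ℝ} (hw : ∀ n < l, w n ≠ 0) : IsUnit (gram l w) :=
  (gram l w).isUnit_of_pivots (fun r => (r.2.rev, r.1.rev)) (fun r => r.1 + r.2)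
    (fun r => by rw [gram_rev_apply_self]; exact hw _ (by have := r.1.isLt; omega))
    (fun _ _ => degree_lt_of_gram_rev_apply_ne_zero)

def conjSwapEquiv (ι R : Type*) [InvolutiveStar R] :
    (ι × ι → ι × ι → R) ≃ Matrix (ι × ι) (ι × ι) R where
  toFun k q p := star (k q.swap p)
  invFun X q p := star (X q.swap p)
  left_inv k := by simp
  right_inv X := by ext; simp

theorem reproducing_iff_mul_gram_eq_one (l : ℕ) (w : ℕ → ℝ) (k : Fin l × Fin l → Fin l × Fin l → ℂ) :
    (∀ a b i j : Fin l,
        ∑ p : Fin l × Fin l,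
          (starRingEnd ℂ) (k (a, b) p) * ((gram l w p (i, j) : ℝ) : ℂ) =
            if b = i ∧ a = j then 1 else 0) ↔
      conjSwapEquiv (Fin l) ℂ k * (gram l w).map Complex.ofReal = 1 := by
  rw [← Matrix.ext_iff, Prod.forall, forall_comm]
  refine forall₂_congr fun _ _ => ?_
  rw [Prod.forall]
  refine forall₂_congr fun _ _ => ?_
  simp only [Matrix.mul_apply, Matrix.one_apply, Prod.mk.injEq]
  rfl

theorem reproducing_kernel_PG_unique_general (l : ℕ)
    (w : ℕ → ℝ) (hw : ∀ n < l, 0 < w n) :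
    ∃! k : (Fin l × Fin l) → (Fin l × Fin l) → ℂ,
      ∀ a b i j : Fin l,
        ∑ p : Fin l × Fin l,
          (starRingEnd ℂ) (k (a, b) p) * ((gram l w p (i, j) : ℝ) : ℂ) =
            if b = i ∧ a = j then 1 else 0 := by
  have hG : IsUnit ((gram l w).map Complex.ofReal) :=
    (isUnit_gram fun n hn => (hw n hn).ne').map Complex.ofRealHom.mapMatrix
  exact ((conjSwapEquiv (Fin l) ℂ).existsUnique_congr (reproducing_iff_mul_gram_eq_one l w)).mpr
    hG.existsUnique_mul_eq_one

/-- For every `l ≥ 2` and all weights `w_0, …, w_{l−1} > 0`, the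
paragrassmann space `PG_{l,q}` has a unique reproducing kernel w.r.t. `⟨·,·⟩_w`: there
exists exactly one `k : ({0,…,l−1}²) × ({0,…,l−1}²) → ℂ` such that
`Σ_{(c,d)} conj(k_{(a,b),(c,d)}) G_{(c,d),(i,j)} = δ_{b,i} δ_{a,j}` for all `a, b, i, j`
(the coordinate form of the reproducing formula `f(θ,θ̄) = ⟨K_PG, f(η,η̄)⟩_w`
for all `f ∈ PG_{l,q}`). -/
theorem reproducing_kernel_PG_unique (l : ℕ) (hl : 2 ≤ l)
    (w : ℕ → ℝ) (hw : ∀ n < l, 0 < w n) :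
    ∃! k : (Fin l × Fin l) → (Fin l × Fin l) → ℂ,
      ∀ a b i j : Fin l,
        ∑ p : Fin l × Fin l,
          (starRingEnd ℂ) (k (a, b) p) * ((gram l w p (i, j) : ℝ) : ℂ) =
            if b = i ∧ a = j then 1 else 0 :=
  reproducing_kernel_PG_unique_general l w hw

end Para
end
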